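/- Let m ≥ 1 and s ≥ 0 be integers with s < m and m + s even. Let Tr : F_{2^m} → F_2 denote the absolute trace and let P : F_{2^m} → F_2 be an s-plateaued function with P(0) = 0, i.e. (Σ_{z ∈ F_{2^m}} (−1)^{P(z)+Tr(dz)})² ∈ {0, 2^{m+s}} for every d ∈ F_{2^m}, where (−1)^t ∈ ℤ is 1 if t = 0 and −1 if t = 1. Then the number of pairs (a, d) ∈ F_2 × F_{2^m} such that #{(x,y,z) ∈ F_{2^m}³ : Tr(x) + Tr(y²) + P(z) = 0 and a + Tr(x + y + dz) = 1} = 2^{3m-2} − 2^{(5m+s-4)/2} equals 2^{m-s}. -/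
import Mathlib

set_option maxHeartbeats 1000000

/-- `(-1)^t ∈ ℤ` for `t ∈ F₂`: `1` if `t = 0` and `-1` if `t = 1`. -/
def sgn (t : ZMod 2) : ℤ := if t = 0 then 1 else -1

lemma sgn_add : ∀ a b : ZMod 2, sgn (a + b) = sgn a * sgn b := by decide

lemma sgn_sq : ∀ a : ZMod 2, sgn a * sgn a = 1 := by decide

lemma sgn_inj : ∀ a b : ZMod 2, sgn a = sgn b → a = b := by decide

lemma sgn_zero : sgn 0 = 1 := rfl

lemma sgn_one : sgn 1 = -1 := by decide

lemma zmod2_ne0 : ∀ t : ZMod 2, ¬ t = 0 → t = 1 := by decide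

lemma zmod2_ne1 : ∀ t : ZMod 2, ¬ t = 1 → t = 0 := by decide

lemma zmod2_calc : ∀ u v w t a : ZMod 2, (u + v + w) + (a + (u + v + t)) = a + (w + t) := by
  decide

lemma quad (f g : ZMod 2) [Decidable (f = 0 ∧ g = 1)] :
    (4:ℤ) * (if f = 0 ∧ g = 1 then (1:ℤ) else 0)
      = 1 + sgn f - sgn g - sgn f * sgn g := by
  by_cases h1 : f = 0 <;> by_cases h2 : g = 1
  · rw [if_pos ⟨h1, h2⟩, h1, h2]; decide
  · rw [if_neg (fun hc => h2 hc.2), h1, zmod2_ne1 g h2]; decide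
  · rw [if_neg (fun hc => h1 hc.1), zmod2_ne0 f h1, h2]; decide
  · rw [if_neg (fun hc => h1 hc.1), zmod2_ne0 f h1, zmod2_ne1 g h2]; decide

section K
variable {K : Type} [Field K] [Fintype K] [Algebra (ZMod 2) K]

lemma trace_sq (y : K) :
    Algebra.trace (ZMod 2) K (y ^ 2) = Algebra.trace (ZMod 2) K y := by
  have : CharP K 2 := charP_of_injective_ringHom (algebraMap (ZMod 2) K).injective 2
  have hr : ∀ r : ZMod 2, r ^ 2 = r := by decide
  let e : K ≃ₐ[ZMod 2] K := AlgEquiv.ofRingEquiv (f := frobeniusEquiv K 2) (fun r => by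
    rw [frobeniusEquiv_def, ← map_pow, hr])
  have he : e y = y ^ 2 := rfl
  have := Algebra.trace_eq_of_algEquiv e y
  rwa [he] at this

lemma sum_sgn_trace {c : K} (hc : c ≠ 0) :
    ∑ x : K, sgn (Algebra.trace (ZMod 2) K (c * x)) = 0 := by
  obtain ⟨t, ht⟩ := Algebra.trace_surjective (ZMod 2) K 1
  set b : K := c⁻¹ * t with hb
  have hcb : Algebra.trace (ZMod 2) K (c * b) = 1 := by
    rw [hb, ← mul_assoc, mul_inv_cancel₀ hc, one_mul, ht]
  have key : ∑ x : K, sgn (Algebra.trace (ZMod 2) K (c * x))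
      = - ∑ x : K, sgn (Algebra.trace (ZMod 2) K (c * x)) := by
    calc ∑ x : K, sgn (Algebra.trace (ZMod 2) K (c * x))
        = ∑ x : K, sgn (Algebra.trace (ZMod 2) K (c * (x + b))) :=
          (Fintype.sum_equiv (Equiv.addRight b) _ _ (fun x => rfl)).symm
      _ = - ∑ x : K, sgn (Algebra.trace (ZMod 2) K (c * x)) := by
          rw [← Finset.sum_neg_distrib]
          refine Finset.sum_congr rfl fun x _ => ?_
          rw [mul_add, map_add, sgn_add, hcb]
          simp [sgn]
  linarith

lemma sum_sgn_trace_one :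
    ∑ x : K, sgn (Algebra.trace (ZMod 2) K x) = 0 := by
  have := sum_sgn_trace (K := K) (c := 1) one_ne_zero
  simpa using this

lemma sum_prod3 (F G H : K → ℤ) :
    ∑ p : K × K × K, F p.1 * G p.2.1 * H p.2.2
      = (∑ x : K, F x) * (∑ y : K, G y) * (∑ z : K, H z) := by
  have sum_prod2 : ∑ q : K × K, G q.1 * H q.2 = (∑ y : K, G y) * (∑ z : K, H z) := by
    rw [Finset.sum_mul_sum, Fintype.sum_prod_type]
  rw [Fintype.sum_prod_type]
  have hx : ∀ x : K, (∑ q : K × K, F x * G q.1 * H q.2)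
      = F x * ((∑ y : K, G y) * (∑ z : K, H z)) := by
    intro x
    rw [← sum_prod2, Finset.mul_sum]
    exact Finset.sum_congr rfl fun q _ => by ring
  simp_rw [hx]
  rw [← Finset.sum_mul, ← mul_assoc]

lemma parseval (P : K → ZMod 2) :
    ∑ d : K, (∑ z : K, sgn (P z + Algebra.trace (ZMod 2) K (d * z))) ^ 2
      = (Fintype.card K : ℤ) ^ 2 := by
  classical
  haveI hchar : CharP K 2 := charP_of_injective_ringHom (algebraMap (ZMod 2) K).injective 2
  have hzz : ∀ t : ZMod 2, t + t = 0 := by decide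
  have h2K : (2 : K) = 0 := by exact_mod_cast CharP.cast_eq_zero K 2
  have hKzz : ∀ x : K, x + x = 0 := fun x => by rw [← two_mul, h2K, zero_mul]
  have step1 : ∀ d : K, (∑ z : K, sgn (P z + Algebra.trace (ZMod 2) K (d * z))) ^ 2
      = ∑ z : K, ∑ w : K, sgn (P z + P w)
          * sgn (Algebra.trace (ZMod 2) K (d * (z + w))) := by
    intro d
    rw [sq, Finset.sum_mul_sum]
    refine Finset.sum_congr rfl fun z _ => Finset.sum_congr rfl fun w _ => ?_
    rw [← sgn_add, ← sgn_add, mul_add, map_add]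
    congr 1
    ring
  simp_rw [step1]
  rw [Finset.sum_comm]
  have step2 : ∀ z : K, ∑ d : K, ∑ w : K, sgn (P z + P w)
      * sgn (Algebra.trace (ZMod 2) K (d * (z + w))) = (Fintype.card K : ℤ) := by
    intro z
    rw [Finset.sum_comm]
    have inner : ∀ w : K, ∑ d : K, sgn (P z + P w)
        * sgn (Algebra.trace (ZMod 2) K (d * (z + w)))
        = if w = z then (Fintype.card K : ℤ) else 0 := by
      intro w
      by_cases h : w = z
      · subst h
        simp [hKzz, hzz, sgn_zero, Finset.sum_const, Finset.card_univ]
      · have hu : z + w ≠ 0 := by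
          intro hzw
          have h1 : w = -z := eq_neg_of_add_eq_zero_right hzw
          rw [CharTwo.neg_eq] at h1
          exact h h1
        rw [← Finset.mul_sum]
        have h0 : ∑ d : K, sgn (Algebra.trace (ZMod 2) K (d * (z + w))) = 0 := by
          have := sum_sgn_trace (c := z + w) hu
          simpa [mul_comm] using this
        rw [h0, mul_zero, if_neg h]
    simp_rw [inner]
    simp
  simp_rw [step2]
  rw [Finset.sum_const, Finset.card_univ, nsmul_eq_mul, sq]

end K

theorem stmt_9 (m s : ℕ) (hm : 1 ≤ m) (hsm : s < m) (hms : Even (m + s))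
    (K : Type) [Field K] [Fintype K] [Algebra (ZMod 2) K]
    (hcard : Fintype.card K = 2 ^ m)
    (P : K → ZMod 2) (hP0 : P 0 = 0)
    (hP : ∀ d : K,
      (∑ z : K, sgn (P z + Algebra.trace (ZMod 2) K (d * z))) ^ 2 ∈
        ({0, 2 ^ (m + s)} : Set ℤ)) :
    {ad : ZMod 2 × K |
        {p : K × K × K |
            Algebra.trace (ZMod 2) K p.1 + Algebra.trace (ZMod 2) K (p.2.1 ^ 2) +
              P p.2.2 = 0 ∧
            ad.1 + Algebra.trace (ZMod 2) K (p.1 + p.2.1 + ad.2 * p.2.2) = 1}.ncard =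
          2 ^ (3 * m - 2) - 2 ^ ((5 * m + s - 4) / 2)}.ncard = 2 ^ (m - s) := by
  obtain ⟨r, hr⟩ := hms
  set k : ℕ := (m + s) / 2 with hkdef
  have hk2 : k + k = m + s := by omega
  have hkm : k ≤ m := by omega
  have hm2 : 2 ≤ m := by omega
  set W : K → ℤ := fun d => ∑ z : K, sgn (P z + Algebra.trace (ZMod 2) K (d * z)) with hWdef
  set c : ℤ := 2 ^ k with hcdef
  have hc2 : c ^ 2 = 2 ^ (m + s) := by
    rw [hcdef, ← pow_mul]
    congr 1
    omega
  have hcpos : (0:ℤ) < c := by rw [hcdef]; positivity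
  have hP' : ∀ d : K, W d ^ 2 = 0 ∨ W d ^ 2 = c ^ 2 := by
    intro d
    have h := hP d
    rw [Set.mem_insert_iff, Set.mem_singleton_iff] at h
    simp only [hWdef]
    rw [hc2]
    exact h
  have hqZ : (Fintype.card K : ℤ) = 2 ^ m := by exact_mod_cast hcard
  -- the main character-sum identity
  have h4N : ∀ (a : ZMod 2) (d : K),
      (4:ℤ) * ((Finset.univ.filter fun p : K × K × K =>
          Algebra.trace (ZMod 2) K p.1 + Algebra.trace (ZMod 2) K (p.2.1 ^ 2) +
            P p.2.2 = 0 ∧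
          a + Algebra.trace (ZMod 2) K (p.1 + p.2.1 + d * p.2.2) = 1).card : ℤ)
        = 2 ^ (3 * m) - sgn a * (2 ^ (2 * m) * W d) := by
    intro a d
    calc (4:ℤ) * ((Finset.univ.filter fun p : K × K × K =>
          Algebra.trace (ZMod 2) K p.1 + Algebra.trace (ZMod 2) K (p.2.1 ^ 2) +
            P p.2.2 = 0 ∧
          a + Algebra.trace (ZMod 2) K (p.1 + p.2.1 + d * p.2.2) = 1).card : ℤ)
        = ∑ p : K × K × K, (1
          + sgn (Algebra.trace (ZMod 2) K p.1) * sgn (Algebra.trace (ZMod 2) K p.2.1)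
              * sgn (P p.2.2)
          - sgn a * (sgn (Algebra.trace (ZMod 2) K p.1)
              * sgn (Algebra.trace (ZMod 2) K p.2.1)
              * sgn (Algebra.trace (ZMod 2) K (d * p.2.2)))
          - sgn a * sgn (P p.2.2 + Algebra.trace (ZMod 2) K (d * p.2.2))) := by
          rw [Finset.card_filter, Nat.cast_sum, Finset.mul_sum]
          refine Finset.sum_congr rfl fun p _ => ?_
          have hsf : sgn (Algebra.trace (ZMod 2) K p.1
              + Algebra.trace (ZMod 2) K (p.2.1 ^ 2) + P p.2.2)
              = sgn (Algebra.trace (ZMod 2) K p.1) * sgn (Algebra.trace (ZMod 2) K p.2.1)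
                * sgn (P p.2.2) := by
            rw [trace_sq, sgn_add, sgn_add]
          have hsg : sgn (a + Algebra.trace (ZMod 2) K (p.1 + p.2.1 + d * p.2.2))
              = sgn a * (sgn (Algebra.trace (ZMod 2) K p.1)
                * sgn (Algebra.trace (ZMod 2) K p.2.1)
                * sgn (Algebra.trace (ZMod 2) K (d * p.2.2))) := by
            rw [sgn_add, map_add, map_add, sgn_add, sgn_add]
          have hfg : sgn (Algebra.trace (ZMod 2) K p.1
              + Algebra.trace (ZMod 2) K (p.2.1 ^ 2) + P p.2.2)
              * sgn (a + Algebra.trace (ZMod 2) K (p.1 + p.2.1 + d * p.2.2))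
              = sgn a * sgn (P p.2.2 + Algebra.trace (ZMod 2) K (d * p.2.2)) := by
            rw [← sgn_add]
            rw [show (Algebra.trace (ZMod 2) K p.1
                + Algebra.trace (ZMod 2) K (p.2.1 ^ 2) + P p.2.2)
                + (a + Algebra.trace (ZMod 2) K (p.1 + p.2.1 + d * p.2.2))
                = a + (P p.2.2 + Algebra.trace (ZMod 2) K (d * p.2.2)) by
              rw [trace_sq, map_add, map_add]
              exact zmod2_calc _ _ _ _ _]
            rw [sgn_add]
          simp only [apply_ite (Nat.cast : ℕ → ℤ), Nat.cast_one, Nat.cast_zero]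
          rw [quad, hfg, hsf, hsg]
      _ = 2 ^ (3 * m) - sgn a * (2 ^ (2 * m) * W d) := by
          rw [Finset.sum_sub_distrib, Finset.sum_sub_distrib, Finset.sum_add_distrib]
          have e1 : ∑ _p : K × K × K, (1:ℤ) = 2 ^ (3 * m) := by
            rw [Finset.sum_const, Finset.card_univ, Fintype.card_prod, Fintype.card_prod,
              hcard, nsmul_eq_mul, mul_one]
            push_cast
            rw [← pow_add, ← pow_add]
            congr 1
            omega
          have e2 : ∑ p : K × K × K, sgn (Algebra.trace (ZMod 2) K p.1)
              * sgn (Algebra.trace (ZMod 2) K p.2.1) * sgn (P p.2.2) = 0 := by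
            rw [show (∑ p : K × K × K, sgn (Algebra.trace (ZMod 2) K p.1)
                  * sgn (Algebra.trace (ZMod 2) K p.2.1) * sgn (P p.2.2))
                = (∑ x : K, sgn (Algebra.trace (ZMod 2) K x))
                  * (∑ y : K, sgn (Algebra.trace (ZMod 2) K y))
                  * (∑ z : K, sgn (P z)) from sum_prod3
                    (fun x => sgn (Algebra.trace (ZMod 2) K x))
                    (fun y => sgn (Algebra.trace (ZMod 2) K y))
                    (fun z => sgn (P z))]
            rw [sum_sgn_trace_one, zero_mul, zero_mul]
          have e3 : ∑ p : K × K × K, sgn a * (sgn (Algebra.trace (ZMod 2) K p.1)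
              * sgn (Algebra.trace (ZMod 2) K p.2.1)
              * sgn (Algebra.trace (ZMod 2) K (d * p.2.2))) = 0 := by
            rw [← Finset.mul_sum]
            rw [show (∑ p : K × K × K, sgn (Algebra.trace (ZMod 2) K p.1)
                  * sgn (Algebra.trace (ZMod 2) K p.2.1)
                  * sgn (Algebra.trace (ZMod 2) K (d * p.2.2)))
                = (∑ x : K, sgn (Algebra.trace (ZMod 2) K x))
                  * (∑ y : K, sgn (Algebra.trace (ZMod 2) K y))
                  * (∑ z : K, sgn (Algebra.trace (ZMod 2) K (d * z))) from sum_prod3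
                    (fun x => sgn (Algebra.trace (ZMod 2) K x))
                    (fun y => sgn (Algebra.trace (ZMod 2) K y))
                    (fun z => sgn (Algebra.trace (ZMod 2) K (d * z)))]
            rw [sum_sgn_trace_one, zero_mul, zero_mul, mul_zero]
          have e4 : ∑ p : K × K × K, sgn a
              * sgn (P p.2.2 + Algebra.trace (ZMod 2) K (d * p.2.2))
              = sgn a * (2 ^ (2 * m) * W d) := by
            rw [← Finset.mul_sum]
            congr 1
            rw [show (∑ p : K × K × K, sgn (P p.2.2 + Algebra.trace (ZMod 2) K (d * p.2.2)))
                = ∑ p : K × K × K, (1:ℤ) * 1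
                    * sgn (P p.2.2 + Algebra.trace (ZMod 2) K (d * p.2.2)) by simp]
            rw [show (∑ p : K × K × K, (1:ℤ) * 1
                    * sgn (P p.2.2 + Algebra.trace (ZMod 2) K (d * p.2.2)))
                = (∑ _x : K, (1:ℤ)) * (∑ _y : K, (1:ℤ))
                  * (∑ z : K, sgn (P z + Algebra.trace (ZMod 2) K (d * z)))
                from sum_prod3 (fun _ => (1:ℤ)) (fun _ => (1:ℤ))
                  (fun z => sgn (P z + Algebra.trace (ZMod 2) K (d * z)))]
            simp only [Finset.sum_const, Finset.card_univ, nsmul_eq_mul, mul_one, hWdef]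
            rw [hqZ, ← pow_add, show m + m = 2 * m by omega]
          rw [e1, e2, e3, e4, add_zero, sub_zero]
  -- inner set as a Finset card
  have hinner : ∀ ad : ZMod 2 × K,
      {p : K × K × K |
          Algebra.trace (ZMod 2) K p.1 + Algebra.trace (ZMod 2) K (p.2.1 ^ 2) +
            P p.2.2 = 0 ∧
          ad.1 + Algebra.trace (ZMod 2) K (p.1 + p.2.1 + ad.2 * p.2.2) = 1}.ncard
        = (Finset.univ.filter fun p : K × K × K =>
            Algebra.trace (ZMod 2) K p.1 + Algebra.trace (ZMod 2) K (p.2.1 ^ 2) +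
              P p.2.2 = 0 ∧
            ad.1 + Algebra.trace (ZMod 2) K (p.1 + p.2.1 + ad.2 * p.2.2) = 1).card := by
    intro ad
    rw [← Set.ncard_coe_finset]
    congr 1
    ext p
    simp
  -- arithmetic on the target weight
  have hle : (5 * m + s - 4) / 2 ≤ 3 * m - 2 := by omega
  have h4M : (4:ℤ) * ((2 ^ (3 * m - 2) - 2 ^ ((5 * m + s - 4) / 2) : ℕ) : ℤ)
      = 2 ^ (3 * m) - 2 ^ (2 * m) * c := by
    have hMcast : ((2 ^ (3 * m - 2) - 2 ^ ((5 * m + s - 4) / 2) : ℕ) : ℤ)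
        = 2 ^ (3 * m - 2) - 2 ^ (2 * m + k - 2) := by
      rw [Nat.cast_sub (Nat.pow_le_pow_right (by norm_num) hle)]
      push_cast
      congr 2
      omega
    rw [hMcast, hcdef]
    have e1 : (2:ℤ) ^ (3 * m) = 4 * 2 ^ (3 * m - 2) := by
      rw [show (4:ℤ) = 2^2 by norm_num, ← pow_add]
      congr 1
      omega
    have e2 : (2:ℤ) ^ (2 * m) * 2 ^ k = 4 * 2 ^ (2 * m + k - 2) := by
      rw [show (4:ℤ) = 2^2 by norm_num, ← pow_add, ← pow_add]
      congr 1
      omega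
    rw [e1, e2]
    ring
  -- the key equivalence
  have hiff : ∀ ad : ZMod 2 × K,
      ((Finset.univ.filter fun p : K × K × K =>
          Algebra.trace (ZMod 2) K p.1 + Algebra.trace (ZMod 2) K (p.2.1 ^ 2) +
            P p.2.2 = 0 ∧
          ad.1 + Algebra.trace (ZMod 2) K (p.1 + p.2.1 + ad.2 * p.2.2) = 1).card
        = 2 ^ (3 * m - 2) - 2 ^ ((5 * m + s - 4) / 2))
      ↔ sgn ad.1 * W ad.2 = c := by
    intro ad
    have h4 := h4N ad.1 ad.2
    have hx : sgn ad.1 * ((2:ℤ) ^ (2 * m) * W ad.2)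
        = 2 ^ (2 * m) * (sgn ad.1 * W ad.2) := by ring
    rw [hx] at h4
    constructor
    · intro h
      rw [h] at h4
      have h5 : (2:ℤ) ^ (2 * m) * (sgn ad.1 * W ad.2) = 2 ^ (2 * m) * c := by
        have := h4M.symm.trans h4
        linarith
      exact mul_left_cancel₀ (by positivity) h5
    · intro h
      rw [h] at h4
      have h6 : (4:ℤ) * ((Finset.univ.filter fun p : K × K × K =>
          Algebra.trace (ZMod 2) K p.1 + Algebra.trace (ZMod 2) K (p.2.1 ^ 2) +
            P p.2.2 = 0 ∧
          ad.1 + Algebra.trace (ZMod 2) K (p.1 + p.2.1 + ad.2 * p.2.2) = 1).card : ℤ)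
          = (4:ℤ) * ((2 ^ (3 * m - 2) - 2 ^ ((5 * m + s - 4) / 2) : ℕ) : ℤ) := by
        rw [h4, h4M]
      have h7 := mul_left_cancel₀ (by norm_num : (4:ℤ) ≠ 0) h6
      exact_mod_cast h7
  -- rewrite outer set
  have houter : {ad : ZMod 2 × K |
      {p : K × K × K |
          Algebra.trace (ZMod 2) K p.1 + Algebra.trace (ZMod 2) K (p.2.1 ^ 2) +
            P p.2.2 = 0 ∧
          ad.1 + Algebra.trace (ZMod 2) K (p.1 + p.2.1 + ad.2 * p.2.2) = 1}.ncard =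
        2 ^ (3 * m - 2) - 2 ^ ((5 * m + s - 4) / 2)}
      = ↑(Finset.univ.filter fun ad : ZMod 2 × K => sgn ad.1 * W ad.2 = c) := by
    ext ad
    rw [Set.mem_setOf_eq, hinner ad, Finset.mem_coe, Finset.mem_filter, hiff ad]
    simp
  rw [houter, Set.ncard_coe_finset]
  -- reduce to counting d with nonzero Walsh value
  have hcardbij : (Finset.univ.filter fun ad : ZMod 2 × K => sgn ad.1 * W ad.2 = c).card
      = (Finset.univ.filter fun d : K => W d ^ 2 = c ^ 2).card := by
    refine Finset.card_bij (fun ad _ => ad.2) ?_ ?_ ?_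
    · intro ad had
      rw [Finset.mem_filter] at had ⊢
      refine ⟨Finset.mem_univ _, ?_⟩
      have h : (sgn ad.1 * W ad.2) ^ 2 = c ^ 2 := by rw [had.2]
      rw [mul_pow, sq, sgn_sq, one_mul] at h
      exact h
    · intro ad had ad' had' heq
      rw [Finset.mem_filter] at had had'
      have heq' : ad.2 = ad'.2 := heq
      have hWne : W ad.2 ≠ 0 := by
        intro h0
        have := had.2
        rw [h0, mul_zero] at this
        exact (ne_of_gt hcpos) this.symm
      have h2 : sgn ad.1 * W ad.2 = sgn ad'.1 * W ad.2 := by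
        rw [had.2, heq', had'.2]
      have := mul_right_cancel₀ hWne h2
      exact Prod.ext (sgn_inj _ _ this) heq'
    · intro d hd
      rw [Finset.mem_filter] at hd
      have hfac : (W d - c) * (W d + c) = 0 := by linear_combination hd.2
      rcases mul_eq_zero.mp hfac with h | h
      · refine ⟨(0, d), Finset.mem_filter.mpr ⟨Finset.mem_univ _, ?_⟩, rfl⟩
        have hWd : W d = c := by linarith
        rw [hWd, sgn_zero, one_mul]
      · refine ⟨(1, d), Finset.mem_filter.mpr ⟨Finset.mem_univ _, ?_⟩, rfl⟩
        have hWd : W d = -c := by linarith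
        rw [hWd, sgn_one]
        ring
  rw [hcardbij]
  -- Parseval
  have hpars : ∑ d : K, W d ^ 2 = (2:ℤ) ^ (2 * m) := by
    have h := parseval (K := K) P
    rw [hqZ] at h
    simp only [hWdef]
    rw [h, ← pow_mul, show m * 2 = 2 * m by omega]
  have hsplit : ∑ d : K, W d ^ 2
      = ((Finset.univ.filter fun d : K => W d ^ 2 = c ^ 2).card : ℤ) * c ^ 2 := by
    rw [← Finset.sum_filter_add_sum_filter_not Finset.univ (fun d : K => W d ^ 2 = c ^ 2)]
    have hA : ∑ d ∈ Finset.univ.filter fun d : K => W d ^ 2 = c ^ 2, W d ^ 2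
        = ((Finset.univ.filter fun d : K => W d ^ 2 = c ^ 2).card : ℤ) * c ^ 2 := by
      rw [Finset.sum_congr rfl (fun d hd => (Finset.mem_filter.mp hd).2)]
      rw [Finset.sum_const, nsmul_eq_mul]
    have hB : ∑ d ∈ Finset.univ.filter fun d : K => ¬ W d ^ 2 = c ^ 2, W d ^ 2 = 0 := by
      refine Finset.sum_eq_zero fun d hd => ?_
      rcases hP' d with h | h
      · exact h
      · exact absurd h (Finset.mem_filter.mp hd).2
    rw [hA, hB, add_zero]
  have hfinal : ((Finset.univ.filter fun d : K => W d ^ 2 = c ^ 2).card : ℤ) * c ^ 2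
      = (2:ℤ) ^ (m - s) * c ^ 2 := by
    rw [← hsplit, hpars, hc2, ← pow_add]
    congr 1
    omega
  have hlast := mul_right_cancel₀ (a := ((Finset.univ.filter
      fun d : K => W d ^ 2 = c ^ 2).card : ℤ)) (b := c ^ 2)
      (by positivity) hfinal
  exact_mod_cast hlast
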